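/- Let α, β be complex numbers with |α| > 1 and |β| > 1, and for each integer v ≥ 1 set c_v = 1/((1 − α^v)(1 − β^v)). Then the double infinite product ∏_{n≥1, m≥1} (1 − α^{−n} β^{−m} t)^{−1} converges term by term in ℂ[[t]] and its limit equals exp(∑_{v≥1} c_v t^v / v). -/

import Mathlib

/-!
Each factor is an exponential: `(1 - x X)⁻¹ = exp (∑_{v ≥ 1} x^v X^v / v)`, because both sides
have constant term `1` and solve the same linear differential equation
`f' = x (1 - x X)⁻¹ f`, whose solutions are determined by their constant term. Since `exp` turns
sums into products, the partial product over `[1, N]²` is the exponential of a series whose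
`v`-th coefficient is `(∑_{n ≤ N} α^{-nv}) (∑_{m ≤ N} β^{-mv}) / v`, a product of two geometric
sums tending to `c_v / v`. Finally, the `k`-th coefficient of `exp h` is a polynomial in the
first `k` coefficients of `h`, so `exp` commutes with coefficientwise limits.
-/

open Filter

/-- The formal exponential `exp h = ∑_{m ≥ 0} h^m / m!` of a power series `h` with zero
constant term. -/
noncomputable def pexp (h : PowerSeries ℂ) : PowerSeries ℂ :=
  PowerSeries.mk fun k =>
    ∑ m ∈ Finset.range (k + 1), ((Nat.factorial m : ℂ))⁻¹ * PowerSeries.coeff k (h ^ m)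

open PowerSeries Finset

namespace PowerSeries

theorem eq_of_derivative_eq_mul {R : Type*} [CommRing R] [IsAddTorsionFree R] {a f g : R⟦X⟧}
    (hf : d⁄dX R f = a * f) (hg : d⁄dX R g = a * g)
    (h0 : constantCoeff f = constantCoeff g) : f = g := by
  ext k
  induction k using Nat.strong_induction_on with
  | _ k ih =>
    cases k with
    | zero => simpa using h0
    | succ n =>
      have hcoeff : coeff n (d⁄dX R f) = coeff n (d⁄dX R g) := by
        rw [hf, hg, coeff_mul, coeff_mul]
        refine sum_congr rfl fun p hp => ?_
        rw [ih p.2 (by rw [HasAntidiagonal.mem_antidiagonal] at hp; omega)]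
      rw [coeff_derivative, coeff_derivative, ← Nat.cast_succ, mul_comm, ← nsmul_eq_mul,
        mul_comm, ← nsmul_eq_mul] at hcoeff
      exact nsmul_right_injective n.succ_ne_zero hcoeff

theorem inv_one_sub_C_mul_X {K : Type*} [Field K] (x : K) :
    (1 - C x * X)⁻¹ = mk (x ^ ·) := by
  have h := congrArg (rescale x) (mk_one_mul_one_sub_eq_one (S := K))
  simp only [map_mul, map_sub, map_one, rescale_mk, rescale_X, Pi.one_apply, mul_one] at h
  rw [PowerSeries.inv_eq_iff_mul_eq_one (by simp), h]

theorem coeff_pow_eq_zero_of_lt {R : Type*} [CommSemiring R] {h : R⟦X⟧}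
    (h0 : constantCoeff h = 0) {k m : ℕ} (hkm : k < m) : coeff k (h ^ m) = 0 :=
  coeff_of_lt_order _ ((Nat.cast_lt.2 hkm).trans_le (le_order_pow_of_constantCoeff_eq_zero m h0))

end PowerSeries

theorem pexp_eq_subst_exp {h : ℂ⟦X⟧} (h0 : constantCoeff h = 0) :
    pexp h = (exp ℂ).subst h := by
  ext k
  rw [coeff_subst' (HasSubst.of_constantCoeff_zero' h0), finsum_eq_sum_of_support_subset
    (s := range (k + 1)), pexp, coeff_mk]
  · refine sum_congr rfl fun m _ => ?_
    simp [coeff_exp]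
  · intro m hm
    simp only [Function.mem_support, coe_range, Set.mem_Iio] at hm ⊢
    by_contra hkm
    exact hm (by rw [coeff_pow_eq_zero_of_lt h0 (by omega), smul_zero])

theorem constantCoeff_pexp (h : ℂ⟦X⟧) : constantCoeff (pexp h) = 1 := by
  rw [← coeff_zero_eq_constantCoeff_apply]
  simp [pexp]

theorem derivative_pexp {h : ℂ⟦X⟧} (h0 : constantCoeff h = 0) :
    d⁄dX ℂ (pexp h) = d⁄dX ℂ h * pexp h := by
  rw [pexp_eq_subst_exp h0, derivative_subst (HasSubst.of_constantCoeff_zero' h0),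
    derivative_exp, mul_comm]

theorem pexp_zero : pexp 0 = 1 :=
  eq_of_derivative_eq_mul (a := 0) (by rw [derivative_pexp (map_zero _), map_zero, zero_mul])
    (by simp) (by simp [constantCoeff_pexp])

theorem pexp_add {f g : ℂ⟦X⟧} (hf : constantCoeff f = 0) (hg : constantCoeff g = 0) :
    pexp (f + g) = pexp f * pexp g := by
  refine eq_of_derivative_eq_mul (a := d⁄dX ℂ f + d⁄dX ℂ g) ?_ ?_ ?_
  · rw [derivative_pexp (by simp [hf, hg]), map_add]
  · rw [Derivation.leibniz, derivative_pexp hf, derivative_pexp hg, smul_eq_mul, smul_eq_mul]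
    ring
  · simp [constantCoeff_pexp]

theorem pexp_sum {ι : Type*} (s : Finset ι) {f : ι → ℂ⟦X⟧}
    (hf : ∀ i ∈ s, constantCoeff (f i) = 0) : pexp (∑ i ∈ s, f i) = ∏ i ∈ s, pexp (f i) := by
  classical
  induction s using Finset.induction_on with
  | empty => rw [sum_empty, prod_empty, pexp_zero]
  | insert j s hj ih =>
    have hs : ∀ i ∈ s, constantCoeff (f i) = 0 := fun i hi => hf i (mem_insert_of_mem hi)
    rw [sum_insert hj, prod_insert hj, pexp_add (hf j (mem_insert_self j s))
      (by rw [map_sum]; exact sum_eq_zero hs), ih hs]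

/-- The series `-log (1 - x X)`. -/
noncomputable def negLogOneSub (x : ℂ) : ℂ⟦X⟧ := mk fun v => if v = 0 then 0 else x ^ v / v

theorem constantCoeff_negLogOneSub (x : ℂ) : constantCoeff (negLogOneSub x) = 0 := by
  rw [← coeff_zero_eq_constantCoeff_apply]
  simp [negLogOneSub]

theorem derivative_negLogOneSub (x : ℂ) :
    d⁄dX ℂ (negLogOneSub x) = C x * (1 - C x * X)⁻¹ := by
  ext k
  rw [inv_one_sub_C_mul_X, coeff_C_mul, coeff_derivative, negLogOneSub, coeff_mk, coeff_mk,
    if_neg k.succ_ne_zero]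
  field_simp
  push_cast
  ring

theorem pexp_negLogOneSub (x : ℂ) : pexp (negLogOneSub x) = (1 - C x * X)⁻¹ := by
  refine eq_of_derivative_eq_mul (a := C x * (1 - C x * X)⁻¹) ?_ ?_ ?_
  · rw [derivative_pexp (constantCoeff_negLogOneSub x), derivative_negLogOneSub]
  · simp only [derivative_inv', map_sub, Derivation.map_one_eq_zero, Derivation.leibniz,
      derivative_X, derivative_C, smul_eq_mul]
    ring
  · simp [constantCoeff_pexp]

theorem coeff_sum_negLogOneSub {ι : Type*} (s : Finset ι) (x : ι → ℂ) (v : ℕ) :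
    coeff v (∑ i ∈ s, negLogOneSub (x i)) = if v = 0 then 0 else (∑ i ∈ s, x i ^ v) / v := by
  simp only [map_sum, negLogOneSub, coeff_mk]
  split_ifs
  · exact sum_const_zero
  · exact (sum_div ..).symm

section

open scoped PowerSeries.WithPiTopology

theorem tendsto_coeff_pexp {F : ℕ → ℂ⟦X⟧} {f : ℂ⟦X⟧}
    (hF : ∀ v, Tendsto (fun N => coeff v (F N)) atTop (nhds (coeff v f))) (k : ℕ) :
    Tendsto (fun N => coeff k (pexp (F N))) atTop (nhds (coeff k (pexp f))) := by
  have hcont : Continuous fun h : ℂ⟦X⟧ => coeff k (pexp h) := by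
    simp only [pexp, coeff_mk]
    exact continuous_finsetSum _ fun m _ =>
      continuous_const.mul ((WithPiTopology.continuous_coeff ℂ k).comp (continuous_pow m))
  exact (hcont.tendsto f).comp ((WithPiTopology.tendsto_iff_coeff_tendsto ℂ _ _ _).2 hF)

end

section

variable {K : Type*} [NormedField K]

theorem tendsto_sum_Icc_inv_pow {a : K} (ha : 1 < ‖a‖) :
    Tendsto (fun N : ℕ => ∑ n ∈ Icc 1 N, (a ^ n)⁻¹) atTop (nhds (a - 1)⁻¹) := by
  have ha0 : a ≠ 0 := norm_pos_iff.1 (one_pos.trans ha)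
  have ha1 : a - 1 ≠ 0 := sub_ne_zero.2 (by rintro rfl; simp at ha)
  have hr : ‖a⁻¹‖ < 1 := by rw [norm_inv]; exact inv_lt_one_of_one_lt₀ ha
  have hsum : ∀ N, ∑ n ∈ Icc 1 N, (a ^ n)⁻¹ = a⁻¹ * ∑ n ∈ range N, a⁻¹ ^ n := fun N => by
    rw [← Finset.Ico_add_one_right_eq_Icc, sum_Ico_eq_sum_range, mul_sum]
    simp [pow_add, mul_comm]
  have hlim : a⁻¹ * (1 - a⁻¹)⁻¹ = (a - 1)⁻¹ := by
    field_simp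
  simp only [hsum, ← hlim]
  exact (hasSum_geometric_of_norm_lt_one hr).tendsto_sum_nat.const_mul _

theorem tendsto_sum_Icc_product_inv_mul_inv_pow {α β : K} (hα : 1 < ‖α‖) (hβ : 1 < ‖β‖)
    {v : ℕ} (hv : v ≠ 0) :
    Tendsto (fun N : ℕ => ∑ p ∈ Icc 1 N ×ˢ Icc 1 N, ((α ^ p.1)⁻¹ * (β ^ p.2)⁻¹) ^ v) atTop
      (nhds (1 / ((1 - α ^ v) * (1 - β ^ v)))) := by
  have hpow : ∀ {c : K}, 1 < ‖c‖ → 1 < ‖c ^ v‖ := fun hc => by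
    rw [norm_pow]; exact one_lt_pow₀ hc hv
  have hsplit : ∀ N, ∑ p ∈ Icc 1 N ×ˢ Icc 1 N, ((α ^ p.1)⁻¹ * (β ^ p.2)⁻¹) ^ v =
      (∑ n ∈ Icc 1 N, ((α ^ v) ^ n)⁻¹) * ∑ m ∈ Icc 1 N, ((β ^ v) ^ m)⁻¹ := fun N => by
    rw [sum_product, sum_mul_sum]
    simp only [mul_pow, inv_pow, ← pow_mul, mul_comm v]
  have hval : (1 : K) / ((1 - α ^ v) * (1 - β ^ v)) = (α ^ v - 1)⁻¹ * (β ^ v - 1)⁻¹ := by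
    rw [one_div, ← mul_inv]; ring_nf
  simp only [hsplit, hval]
  exact (tendsto_sum_Icc_inv_pow (hpow hα)).mul (tendsto_sum_Icc_inv_pow (hpow hβ))

end

/-- Let `α, β ∈ ℂ` with `|α| > 1`, `|β| > 1`, and `c_v = 1 / ((1 - α^v)(1 - β^v))`.
Then the double infinite product `∏_{n,m ≥ 1} (1 - α^{-n} β^{-m} t)⁻¹` converges term by
term in `ℂ[[t]]` to `exp (∑_{v ≥ 1} c_v t^v / v)` (the zeta function `Z(BE, t)`). -/
theorem zeta_BE_product (α β : ℂ) (hα : 1 < ‖α‖) (hβ : 1 < ‖β‖) :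
    ∀ k : ℕ,
      Tendsto
        (fun N : ℕ => PowerSeries.coeff k
          (∏ p ∈ Finset.Icc 1 N ×ˢ Finset.Icc 1 N,
            (1 - PowerSeries.C ((α ^ p.1)⁻¹ * (β ^ p.2)⁻¹) * PowerSeries.X)⁻¹))
        atTop
        (nhds (PowerSeries.coeff k (pexp (PowerSeries.mk fun v =>
          if v = 0 then 0 else (1 / ((1 - α ^ v) * (1 - β ^ v))) / v)))) := by
  have hprod : ∀ N : ℕ, ∏ p ∈ Icc 1 N ×ˢ Icc 1 N, (1 - C ((α ^ p.1)⁻¹ * (β ^ p.2)⁻¹) * X)⁻¹ =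
      pexp (∑ p ∈ Icc 1 N ×ˢ Icc 1 N, negLogOneSub ((α ^ p.1)⁻¹ * (β ^ p.2)⁻¹)) := fun N => by
    simp only [pexp_sum _ fun p _ => constantCoeff_negLogOneSub _, pexp_negLogOneSub]
  simp only [hprod]
  refine tendsto_coeff_pexp fun v => ?_
  simp only [coeff_sum_negLogOneSub, coeff_mk]
  rcases eq_or_ne v 0 with rfl | hv
  · exact tendsto_const_nhds
  · simp only [if_neg hv]
    exact (tendsto_sum_Icc_product_inv_mul_inv_pow hα hβ hv).div_const _
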